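/- For every POVM (M₁,...,Mᵣ) and every index m, the success probability satisfies ∑ᵢ qᵢ tr(ρᵢ Mᵢ) ≤ q_m + ∑ᵢ ‖(qᵢρᵢ − q_mρ_m)⁺‖₁, where X⁺ denotes the positive part of the self-adjoint operator X. -/

import Mathlib

open scoped ComplexOrder

/-- The operator absolute value `√(AᴴA)` of a matrix. -/
noncomputable def matAbs {n : ℕ} (A : Matrix (Fin n) (Fin n) ℂ) : Matrix (Fin n) (Fin n) ℂ :=
  ((Matrix.posSemidef_conjTranspose_mul_self A).1.eigenvectorUnitary : Matrix (Fin n) (Fin n) ℂ) *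
    Matrix.diagonal ((↑) ∘ (√·) ∘ (Matrix.posSemidef_conjTranspose_mul_self A).1.eigenvalues) *
    (star (Matrix.posSemidef_conjTranspose_mul_self A).1.eigenvectorUnitary : Matrix (Fin n) (Fin n) ℂ)

/-- The trace norm `‖A‖₁ = tr √(AᴴA)`. -/
noncomputable def traceNorm {n : ℕ} (A : Matrix (Fin n) (Fin n) ℂ) : ℝ :=
  ((matAbs A).trace).re

/-- The positive part `A⁺ = (|A| + A)/2` of a self-adjoint matrix `A`, so that
`A = A⁺ - A⁻` with `A⁺, A⁻ ≥ 0`. -/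
noncomputable def matPosPart {n : ℕ} (A : Matrix (Fin n) (Fin n) ℂ) : Matrix (Fin n) (Fin n) ℂ :=
  (2 : ℂ)⁻¹ • (matAbs A + A)

/-- A density operator: positive semidefinite with unit trace. -/
def IsDensity {n : ℕ} (ρ : Matrix (Fin n) (Fin n) ℂ) : Prop :=
  ρ.PosSemidef ∧ ρ.trace = 1

/-- A POVM with `r` outcomes: positive semidefinite effects summing to the identity. -/
def IsPOVM {n r : ℕ} (M : Fin r → Matrix (Fin n) (Fin n) ℂ) : Prop :=
  (∀ i, (M i).PosSemidef) ∧ ∑ i, M i = 1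

/-- Success probability `∑ i, q i * tr (ρ i * M i)` of a measurement. -/
noncomputable def successProb {n r : ℕ} (q : Fin r → ℝ)
    (ρ M : Fin r → Matrix (Fin n) (Fin n) ℂ) : ℝ :=
  ∑ i, q i * ((ρ i * M i).trace).re

/-- Optimal success probability under minimum-error discrimination. -/
noncomputable def optSuccess {n r : ℕ} (q : Fin r → ℝ)
    (ρ : Fin r → Matrix (Fin n) (Fin n) ℂ) : ℝ :=
  sSup {p | ∃ M, IsPOVM M ∧ p = successProb q ρ M}

/-!
Put `Xᵢ = qᵢρᵢ - q_mρ_m`. Since `∑ Mᵢ = 1` and `tr ρ_m = 1`, the success probability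
equals `q_m + ∑ tr (Xᵢ Mᵢ)`. For self-adjoint `X` and `0 ≤ M ≤ 1`,
`tr (X M) = tr (X⁺ M) - tr (X⁻ M) ≤ tr (X⁺ M) = tr X⁺ - tr (X⁺ (1 - M)) ≤ tr X⁺`,
because the trace of a product of two positive matrices is nonnegative
(`tr (A B) = tr (√A B √A)`), and `tr X⁺ = ‖X⁺‖₁` as `X⁺ ≥ 0`.
-/

open scoped MatrixOrder

namespace Matrix

variable {𝕜 ι : Type*} [RCLike 𝕜] [Fintype ι] [DecidableEq ι]

theorem trace_mul_nonneg {A B : Matrix ι ι 𝕜} (hA : 0 ≤ A) (hB : 0 ≤ B) :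
    0 ≤ (A * B).trace := by
  have hcycle : (A * B).trace = (CFC.sqrt A * B * CFC.sqrt A).trace := by
    conv_lhs => rw [← CFC.sqrt_mul_sqrt_self A hA]
    rw [trace_mul_cycle, trace_mul_cycle]
  rw [hcycle]
  exact (nonneg_iff_posSemidef.1
    (conjugate_nonneg_of_nonneg hB (CFC.sqrt_nonneg A))).trace_nonneg

theorem trace_mul_le_trace_posPart {X Y : Matrix ι ι 𝕜} (hX : IsSelfAdjoint X)
    (hY₀ : 0 ≤ Y) (hY₁ : Y ≤ 1) : (X * Y).trace ≤ (X⁺).trace := by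
  calc (X * Y).trace
      = (X⁺ * Y).trace - (X⁻ * Y).trace := by
        rw [← trace_sub, ← Matrix.sub_mul, CFC.posPart_sub_negPart X hX]
    _ ≤ (X⁺ * Y).trace := sub_le_self _ (trace_mul_nonneg (CFC.negPart_nonneg X) hY₀)
    _ = (X⁺).trace - (X⁺ * (1 - Y)).trace := by
        rw [Matrix.mul_sub, Matrix.mul_one, trace_sub, sub_sub_cancel]
    _ ≤ (X⁺).trace :=
        sub_le_self _ (trace_mul_nonneg (CFC.posPart_nonneg X) (sub_nonneg.2 hY₁))

end Matrix

theorem matAbs_eq_cfcAbs {n : ℕ} (A : Matrix (Fin n) (Fin n) ℂ) : matAbs A = CFC.abs A := by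
  have hA := Matrix.posSemidef_conjTranspose_mul_self A
  rw [CFC.abs, Matrix.star_eq_conjTranspose, CFC.sqrt_eq_real_sqrt _ hA.nonneg, cfcₙ_eq_cfc,
    hA.1.cfc_eq, Matrix.IsHermitian.cfc, Unitary.conjStarAlgAut_apply, matAbs]
  rfl

theorem matPosPart_eq_posPart {n : ℕ} {A : Matrix (Fin n) (Fin n) ℂ} (hA : IsSelfAdjoint A) :
    matPosPart A = A⁺ := by
  rw [matPosPart, matAbs_eq_cfcAbs, CFC.abs_add_self A hA, ← Nat.cast_smul_eq_nsmul ℂ,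
    smul_smul]
  norm_num

theorem traceNorm_of_nonneg {n : ℕ} {A : Matrix (Fin n) (Fin n) ℂ} (hA : 0 ≤ A) :
    traceNorm A = A.trace.re := by
  rw [traceNorm, matAbs_eq_cfcAbs, CFC.abs_of_nonneg A hA]

theorem re_trace_mul_le_traceNorm_matPosPart {n : ℕ} {X Y : Matrix (Fin n) (Fin n) ℂ}
    (hX : IsSelfAdjoint X) (hY₀ : 0 ≤ Y) (hY₁ : Y ≤ 1) :
    (X * Y).trace.re ≤ traceNorm (matPosPart X) := by
  rw [matPosPart_eq_posPart hX, traceNorm_of_nonneg (CFC.posPart_nonneg X)]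
  exact Complex.re_le_re (Matrix.trace_mul_le_trace_posPart hX hY₀ hY₁)

theorem IsPOVM.le_one {n r : ℕ} {M : Fin r → Matrix (Fin n) (Fin n) ℂ} (hM : IsPOVM M)
    (i : Fin r) : M i ≤ 1 :=
  hM.2 ▸ Finset.single_le_sum (fun j _ => (hM.1 j).nonneg) (Finset.mem_univ i)

theorem successProb_eq_sum_sub_add {n r : ℕ} (q : Fin r → ℝ)
    (ρ M : Fin r → Matrix (Fin n) (Fin n) ℂ) (hM : ∑ i, M i = 1)
    (σ : Matrix (Fin n) (Fin n) ℂ) :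
    successProb q ρ M = ∑ i, (((q i : ℂ) • ρ i - σ) * M i).trace.re + σ.trace.re := by
  have hσ : σ.trace = ∑ i, (σ * M i).trace := by
    rw [← Matrix.trace_sum, ← Finset.mul_sum, hM, Matrix.mul_one]
  simp only [successProb, hσ, Complex.re_sum, ← Finset.sum_add_distrib, Matrix.sub_mul,
    Matrix.trace_sub, Matrix.smul_mul, Matrix.trace_smul, Complex.sub_re, smul_eq_mul,
    Complex.re_ofReal_mul, sub_add_cancel]

theorem stmt4_general {n r : ℕ} (ρ M : Fin r → Matrix (Fin n) (Fin n) ℂ)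
    (q : Fin r → ℝ) (hρ : ∀ i, IsDensity (ρ i)) (hM : IsPOVM M) (m : Fin r) :
    successProb q ρ M
      ≤ q m + ∑ i, traceNorm (matPosPart ((q i : ℂ) • ρ i - (q m : ℂ) • ρ m)) := by
  have hX (i : Fin r) : IsSelfAdjoint ((q i : ℂ) • ρ i - (q m : ℂ) • ρ m) :=
    ((hρ i).1.1.smul (Complex.conj_ofReal _)).sub ((hρ m).1.1.smul (Complex.conj_ofReal _))
  rw [successProb_eq_sum_sub_add q ρ M hM.2 ((q m : ℂ) • ρ m), Matrix.trace_smul, (hρ m).2,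
    smul_eq_mul, mul_one, Complex.ofReal_re, add_comm]
  gcongr with i
  exact re_trace_mul_le_traceNorm_matPosPart (hX i) (hM.1 i).nonneg (hM.le_one i)

theorem stmt4 {n r : ℕ} (ρ M : Fin r → Matrix (Fin n) (Fin n) ℂ)
    (q : Fin r → ℝ) (hρ : ∀ i, IsDensity (ρ i)) (hq : ∀ i, 0 < q i)
    (hq1 : ∑ i, q i = 1) (hM : IsPOVM M) (m : Fin r) :
    successProb q ρ M
      ≤ q m + ∑ i, traceNorm (matPosPart ((q i : ℂ) • ρ i - (q m : ℂ) • ρ m)) :=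
  stmt4_general ρ M q hρ hM m
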